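/- arXiv:1502.05765 — 2 statements merged into one kernel-verified Lean document; each statement's English description precedes it below -/
import Mathlib

section
/- In the abstract Signorini-problem setting below, the solution u of the gradient scheme satisfies, for every v_D ∈ K_D, the function error estimate ‖Π u − ū‖_{L²(μ)} ≤ C_D sqrt( (2/λ̲) G_D(ū, v_D)⁺ ) + (1/λ̲) [ C_D W + (C_D λ̄ + λ̲) S_D(ū, v_D) ], where C_D = max_{v ∈ X, v ≠ 0} (‖Π v‖_{L²(μ)} + ‖T v‖_{L²(ν)}) / ‖∇_D v‖_{L²(μ;ℝ^d)} is the coercivity constant. (Estimate (2.8) of Theorem 2.4, in the L²-boundary setting.) -/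
/-!
Write `w = u - v_D` and `N = ‖∇_D w‖`. Testing the scheme with `v_D` and subtracting the identity
defining `W`, tested with `w`, gives by coercivity and boundedness of `Λ`
`λ̲ N² ≤ ∫ Λ ∇_D w · ∇_D w ≤ (W + λ̄ ‖∇_D v_D - G‖) N - ∫ φ T w`.
The Signorini conditions make `∫ φ (T u - b) ≥ 0`, whence `-∫ φ T w ≤ G_D(ū, v_D)⁺`; solving the
quadratic inequality for `N` and using `‖Π u - ū‖ ≤ C_D N + ‖Π v_D - ū‖` gives the estimate.
-/

open MeasureTheory
open scoped RealInnerProductSpace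

theorem ContinuousLinearMap.abs_inner_le_of_abs_inner_self_le {E : Type*} [NormedAddCommGroup E]
    [InnerProductSpace ℝ E] (T : E →L[ℝ] E) (hT : (T : E →ₗ[ℝ] E).IsSymmetric) {c : ℝ}
    (hc : 0 ≤ c) (h : ∀ x, |⟪T x, x⟫| ≤ c * ‖x‖ ^ 2) (x y : E) :
    |⟪T x, y⟫| ≤ c * ‖x‖ * ‖y‖ := by
  have hT_norm : ‖T‖ ≤ c := by
    rw [T.norm_eq_iSup_rayleighQuotient hT]
    refine ciSup_le fun z => ?_
    rw [rayleighQuotient, abs_div, abs_pow, abs_norm]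
    exact div_le_of_le_mul₀ (by positivity) hc (by simpa [reApplyInnerSelf] using h z)
  calc |⟪T x, y⟫| ≤ ‖T x‖ * ‖y‖ := abs_real_inner_le_norm _ _
    _ ≤ c * ‖x‖ * ‖y‖ := by gcongr; exact T.le_of_opNorm_le hT_norm x

theorem Matrix.abs_inner_toEuclideanLin_le {n : Type*} [Fintype n] [DecidableEq n]
    {A : Matrix n n ℝ} (hA : A.IsSymm) {l c : ℝ} (hl : 0 ≤ l) (hc : 0 ≤ c)
    (h : ∀ x, l * ‖x‖ ^ 2 ≤ ⟪toEuclideanLin A x, x⟫ ∧ ⟪toEuclideanLin A x, x⟫ ≤ c * ‖x‖ ^ 2)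
    (x y : EuclideanSpace ℝ n) :
    |⟪toEuclideanLin A x, y⟫| ≤ c * ‖x‖ * ‖y‖ := by
  refine (toEuclideanCLM (𝕜 := ℝ) A).abs_inner_le_of_abs_inner_self_le
    (isSymmetric_toEuclideanLin_iff.mpr (isHermitian_iff_isSymm.mpr hA)) hc (fun z => ?_) x y
  change |⟪toEuclideanLin A z, z⟫| ≤ c * ‖z‖ ^ 2
  obtain ⟨hlo, hhi⟩ := h z
  exact abs_le.mpr ⟨by nlinarith [sq_nonneg ‖z‖], hhi⟩

theorem LinearMap.exists_norm_le_mul_norm_of_injective {X E V : Type*} [AddCommGroup X]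
    [Module ℝ X] [FiniteDimensional ℝ X] [NormedAddCommGroup E] [NormedSpace ℝ E]
    [NormedAddCommGroup V] [NormedSpace ℝ V] (L : X →ₗ[ℝ] E) {g : X →ₗ[ℝ] V}
    (hg : Function.Injective g) : ∃ C, ∀ v, ‖L v‖ ≤ C * ‖g v‖ := by
  let e := LinearEquiv.ofInjective g hg
  let L' := (L ∘ₗ e.symm.toLinearMap).toContinuousLinearMap
  refine ⟨‖L'‖, fun v => ?_⟩
  calc ‖L v‖ = ‖L' (e v)‖ := by simp [L']
    _ ≤ ‖L'‖ * ‖g v‖ := L'.le_opNorm _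

theorem le_iSup_div_norm_mul {X V : Type*} [AddCommGroup X] [Module ℝ X]
    [NormedAddCommGroup V] [Module ℝ V] {g : X →ₗ[ℝ] V} (hg : Function.Injective g)
    {q : X → ℝ} {C : ℝ} (hq : ∀ v, q v ≤ C * ‖g v‖) (v : X) :
    q v ≤ (⨆ w : {w : X // w ≠ 0}, q w / ‖g w‖) * ‖g v‖ := by
  have hpos : ∀ w : {w : X // w ≠ 0}, 0 < ‖g w‖ := fun w =>
    norm_pos_iff.mpr ((map_ne_zero_iff g hg).mpr w.2)
  rcases eq_or_ne v 0 with rfl | hv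
  · simpa using hq 0
  · refine (div_le_iff₀ (hpos ⟨v, hv⟩)).mp
      (le_ciSup (f := fun w : {w : X // w ≠ 0} => q w / ‖g w‖) ⟨C, ?_⟩ ⟨v, hv⟩)
    rintro _ ⟨w, rfl⟩
    exact (div_le_iff₀ (hpos w)).mpr (hq w)

theorem norm_add_norm_le_iSup_div_norm_mul {X E F V : Type*} [AddCommGroup X] [Module ℝ X]
    [FiniteDimensional ℝ X] [NormedAddCommGroup E] [NormedSpace ℝ E] [NormedAddCommGroup F]
    [NormedSpace ℝ F] [NormedAddCommGroup V] [NormedSpace ℝ V] (P : X →ₗ[ℝ] E)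
    (Q : X →ₗ[ℝ] F) {g : X →ₗ[ℝ] V} (hg : Function.Injective g) (v : X) :
    ‖P v‖ + ‖Q v‖ ≤ (⨆ w : {w : X // w ≠ 0}, (‖P w‖ + ‖Q w‖) / ‖g w‖) * ‖g v‖ := by
  obtain ⟨C₁, hC₁⟩ := P.exists_norm_le_mul_norm_of_injective hg
  obtain ⟨C₂, hC₂⟩ := Q.exists_norm_le_mul_norm_of_injective hg
  exact le_iSup_div_norm_mul hg (q := fun v => ‖P v‖ + ‖Q v‖) (C := C₁ + C₂)
    (fun w => by linarith [hC₁ w, hC₂ w]) v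

theorem le_div_add_sqrt_of_mul_sq_le {l A g N : ℝ} (hl : 0 < l) (hA : 0 ≤ A) (hg : 0 ≤ g)
    (h : l * N ^ 2 ≤ A * N + g) : N ≤ A / l + √(g / l) := by
  set s := √(g / l)
  have hs : 0 ≤ s := Real.sqrt_nonneg _
  have hls : l * s ^ 2 = g := by rw [Real.sq_sqrt (by positivity)]; field_simp
  rw [div_add' _ _ _ hl.ne', le_div_iff₀ hl]
  by_contra! hlt
  have hsN : s < N := by nlinarith
  nlinarith [mul_pos (sub_pos.2 hlt) (sub_pos.2 hsN), mul_nonneg hs (sub_pos.2 hlt).le]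

namespace MeasureTheory.L2

variable {α : Type*} [MeasurableSpace α] {μ : Measure α}

theorem integrable_norm_mul_norm {E F : Type*} [NormedAddCommGroup E] [NormedAddCommGroup F]
    (f : Lp E 2 μ) (g : Lp F 2 μ) : Integrable (fun x => ‖f x‖ * ‖g x‖) μ :=
  (Lp.memLp f).norm.integrable_mul (Lp.memLp g).norm

theorem integral_norm_mul_norm_le {E F : Type*} [NormedAddCommGroup E] [NormedAddCommGroup F]
    (f : Lp E 2 μ) (g : Lp F 2 μ) : ∫ x, ‖f x‖ * ‖g x‖ ∂μ ≤ ‖f‖ * ‖g‖ := by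
  let f' := (Lp.memLp f).norm.toLp
  let g' := (Lp.memLp g).norm.toLp
  calc ∫ x, ‖f x‖ * ‖g x‖ ∂μ = ⟪f', g'⟫ := by
        rw [inner_def]
        refine integral_congr_ae ?_
        filter_upwards [MemLp.coeFn_toLp (Lp.memLp f).norm,
          MemLp.coeFn_toLp (Lp.memLp g).norm] with x hf hg
        simp [f', g', hf, hg, mul_comm]
    _ ≤ ‖f'‖ * ‖g'‖ := real_inner_le_norm _ _
    _ = ‖f‖ * ‖g‖ := by
        rw [Lp.norm_toLp, Lp.norm_toLp, Lp.norm_def, Lp.norm_def, eLpNorm_norm, eLpNorm_norm]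

theorem integrable_mul (f g : Lp ℝ 2 μ) : Integrable (fun x => f x * g x) μ := by
  simpa [mul_comm] using integrable_inner (𝕜 := ℝ) f g

theorem abs_integral_mul_le (f g : Lp ℝ 2 μ) : |∫ x, f x * g x ∂μ| ≤ ‖f‖ * ‖g‖ := by
  have h : ∫ x, f x * g x ∂μ = ⟪f, g⟫ := by
    rw [inner_def]; simp [mul_comm]
  rw [h]
  exact abs_real_inner_le_norm f g

theorem integral_mul_coeFn_sub (φ f g b : Lp ℝ 2 μ) :
    ∫ x, φ x * (f - g) x ∂μ = ∫ x, φ x * (f x - b x) ∂μ - ∫ x, φ x * (g x - b x) ∂μ := by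
  have hsub : ∀ h : Lp ℝ 2 μ, ∫ x, φ x * (h x - b x) ∂μ = ∫ x, φ x * h x ∂μ - ∫ x, φ x * b x ∂μ :=
    fun h => by simp only [mul_sub]; exact integral_sub (integrable_mul φ h) (integrable_mul φ b)
  rw [hsub, hsub, sub_sub_sub_cancel_right, ← integral_sub (integrable_mul φ f) (integrable_mul φ g)]
  refine integral_congr_ae ?_
  filter_upwards [Lp.coeFn_sub f g] with x hx
  rw [hx, Pi.sub_apply, mul_sub]

end MeasureTheory.L2

section DiffusionPairing

variable {Ω : Type*} [MeasurableSpace Ω] {μ : Measure Ω} {d : ℕ}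
  {Λ : Ω → Matrix (Fin d) (Fin d) ℝ}

noncomputable def diffusionPairing (μ : Measure Ω) (Λ : Ω → Matrix (Fin d) (Fin d) ℝ)
    (F Z : Lp (EuclideanSpace ℝ (Fin d)) 2 μ) : ℝ :=
  ∫ x, ⟪Matrix.toEuclideanLin (Λ x) (F x), Z x⟫ ∂μ

theorem aestronglyMeasurable_inner_toEuclideanLin (hΛ : Measurable fun x i j => Λ x i j)
    {F Z : Ω → EuclideanSpace ℝ (Fin d)} (hF : AEStronglyMeasurable F μ)
    (hZ : AEStronglyMeasurable Z μ) :
    AEStronglyMeasurable (fun x => ⟪Matrix.toEuclideanLin (Λ x) (F x), Z x⟫) μ := by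
  have hcont : Continuous fun p : Matrix (Fin d) (Fin d) ℝ × EuclideanSpace ℝ (Fin d) ×
      EuclideanSpace ℝ (Fin d) => ⟪Matrix.toEuclideanLin p.1 p.2.1, p.2.2⟫ :=
    ((PiLp.continuous_toLp 2 _).comp (continuous_fst.matrix_mulVec
      ((PiLp.continuous_ofLp 2 _).comp continuous_snd.fst))).inner continuous_snd.snd
  have hΛ' : AEStronglyMeasurable Λ μ := hΛ.aestronglyMeasurable
  exact (hcont.comp_aestronglyMeasurable (hΛ'.prodMk (hF.prodMk hZ)) :)

variable {c : ℝ} (hΛ : Measurable fun x i j => Λ x i j)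
  (hB : ∀ᵐ x ∂μ, ∀ ξ η, |⟪Matrix.toEuclideanLin (Λ x) ξ, η⟫| ≤ c * ‖ξ‖ * ‖η‖)
include hΛ hB

theorem integrable_inner_toEuclideanLin (F Z : Lp (EuclideanSpace ℝ (Fin d)) 2 μ) :
    Integrable (fun x => ⟪Matrix.toEuclideanLin (Λ x) (F x), Z x⟫) μ := by
  refine ((L2.integrable_norm_mul_norm F Z).const_mul c).mono'
    (aestronglyMeasurable_inner_toEuclideanLin hΛ (Lp.aestronglyMeasurable F)
      (Lp.aestronglyMeasurable Z)) ?_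
  filter_upwards [hB] with x hx
  simpa [mul_assoc] using hx (F x) (Z x)

theorem abs_diffusionPairing_le (hc : 0 ≤ c) (F Z : Lp (EuclideanSpace ℝ (Fin d)) 2 μ) :
    |diffusionPairing μ Λ F Z| ≤ c * ‖F‖ * ‖Z‖ := by
  calc |diffusionPairing μ Λ F Z|
      ≤ ∫ x, |⟪Matrix.toEuclideanLin (Λ x) (F x), Z x⟫| ∂μ := abs_integral_le_integral_abs
    _ ≤ ∫ x, c * (‖F x‖ * ‖Z x‖) ∂μ := by
        refine integral_mono_ae (integrable_inner_toEuclideanLin hΛ hB F Z).abs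
          ((L2.integrable_norm_mul_norm F Z).const_mul c) ?_
        filter_upwards [hB] with x hx
        simpa [mul_assoc] using hx (F x) (Z x)
    _ ≤ c * ‖F‖ * ‖Z‖ := by
        rw [integral_const_mul, mul_assoc]
        exact mul_le_mul_of_nonneg_left (L2.integral_norm_mul_norm_le F Z) hc

theorem diffusionPairing_sub_left (F F' Z : Lp (EuclideanSpace ℝ (Fin d)) 2 μ) :
    diffusionPairing μ Λ (F - F') Z = diffusionPairing μ Λ F Z - diffusionPairing μ Λ F' Z := by
  rw [diffusionPairing, diffusionPairing, diffusionPairing,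
    ← integral_sub (integrable_inner_toEuclideanLin hΛ hB F Z)
      (integrable_inner_toEuclideanLin hΛ hB F' Z)]
  refine integral_congr_ae ?_
  filter_upwards [Lp.coeFn_sub F F'] with x hx
  rw [hx, Pi.sub_apply, map_sub, inner_sub_left]

theorem mul_norm_sq_le_diffusionPairing {l : ℝ}
    (hcoer : ∀ᵐ x ∂μ, ∀ ξ, l * ‖ξ‖ ^ 2 ≤ ⟪Matrix.toEuclideanLin (Λ x) ξ, ξ⟫)
    (F : Lp (EuclideanSpace ℝ (Fin d)) 2 μ) :
    l * ‖F‖ ^ 2 ≤ diffusionPairing μ Λ F F := by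
  rw [← real_inner_self_eq_norm_sq, L2.inner_def, ← integral_const_mul]
  refine integral_mono_ae ((L2.integrable_inner F F).const_mul l)
    (integrable_inner_toEuclideanLin hΛ hB F F) ?_
  filter_upwards [hcoer] with x hx
  simpa [real_inner_self_eq_norm_sq] using hx (F x)

theorem integral_inner_toEuclideanLin_sub_mul (F G : Lp (EuclideanSpace ℝ (Fin d)) 2 μ)
    (p f : Lp ℝ 2 μ) :
    ∫ x, (⟪F x, Matrix.toEuclideanLin (Λ x) (G x)⟫ - p x * f x) ∂μ
      = diffusionPairing μ Λ G F - ∫ x, f x * p x ∂μ := by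
  rw [diffusionPairing,
    ← integral_sub (integrable_inner_toEuclideanLin hΛ hB G F) (L2.integrable_mul f p)]
  simp only [real_inner_comm (F _), mul_comm (p _)]

theorem abs_diffusionPairing_sub_sub_le {B : Type*} [MeasurableSpace B] {ν : Measure B}
    (hc : 0 ≤ c) (G Z : Lp (EuclideanSpace ℝ (Fin d)) 2 μ) (p f : Lp ℝ 2 μ) (t φ : Lp ℝ 2 ν)
    {C : ℝ} (hpt : ‖p‖ + ‖t‖ ≤ C * ‖Z‖) :
    |diffusionPairing μ Λ G Z - ∫ x, f x * p x ∂μ - ∫ y, φ y * t y ∂ν|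
      ≤ (c * ‖G‖ + C * ‖f‖ + C * ‖φ‖) * ‖Z‖ := by
  have hG := abs_diffusionPairing_le hΛ hB hc G Z
  have hf := L2.abs_integral_mul_le f p
  have hφ := L2.abs_integral_mul_le φ t
  have h₁ := abs_sub (diffusionPairing μ Λ G Z - ∫ x, f x * p x ∂μ) (∫ y, φ y * t y ∂ν)
  have h₂ := abs_sub (diffusionPairing μ Λ G Z) (∫ x, f x * p x ∂μ)
  nlinarith [norm_nonneg f, norm_nonneg φ, norm_nonneg p, norm_nonneg t]

end DiffusionPairing

theorem integral_mul_sub_nonneg_of_signorini {B : Type*} [MeasurableSpace B] {ν : Measure B}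
    {Γ₁ Γ₂ Γ₃ : Set B} (hΓ : Γ₁ ∪ Γ₂ ∪ Γ₃ = Set.univ) {t a b φ : B → ℝ}
    (ht₁ : ∀ᵐ y ∂ν, y ∈ Γ₁ → t y = 0) (ht₃ : ∀ᵐ y ∂ν, y ∈ Γ₃ → t y ≤ a y)
    (hsig : ∀ᵐ y ∂ν, (y ∈ Γ₁ → b y = 0) ∧ (y ∈ Γ₂ → φ y = 0) ∧
        (y ∈ Γ₃ → b y ≤ a y ∧ φ y ≤ 0 ∧ φ y * (a y - b y) = 0)) :
    0 ≤ ∫ y, φ y * (t y - b y) ∂ν := by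
  refine integral_nonneg_of_ae ?_
  filter_upwards [ht₁, ht₃, hsig] with y ht₁ ht₃ ⟨hb₁, hφ₂, hsig₃⟩
  rw [Pi.zero_apply]
  have hy : y ∈ Γ₁ ∪ Γ₂ ∪ Γ₃ := hΓ ▸ Set.mem_univ y
  rcases hy with (hy | hy) | hy
  · simp [ht₁ hy, hb₁ hy]
  · simp [hφ₂ hy]
  · obtain ⟨-, hφ, hcompl⟩ := hsig₃ hy
    -- `φ (t - b) = φ (t - a) + φ (a - b)` and the complementarity condition kills the last term.
    nlinarith [mul_nonneg_of_nonpos_of_nonpos hφ (sub_nonpos.2 (ht₃ hy))]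

theorem mul_norm_sub_sq_le_of_coercive {V : Type*} [NormedAddCommGroup V] {a : V → V → ℝ}
    {l c : ℝ} (ha_sub : ∀ F F' Z, a (F - F') Z = a F Z - a F' Z)
    (ha_le : ∀ F Z, a F Z ≤ c * ‖F‖ * ‖Z‖) (ha_coer : ∀ F, l * ‖F‖ ^ 2 ≤ a F F)
    {U U' G : V} {r W g : ℝ} (hU : a U (U - U') ≤ r)
    (hr : r ≤ a G (U - U') + W * ‖U - U'‖ + g) :
    l * ‖U - U'‖ ^ 2 ≤ (W + c * ‖U' - G‖) * ‖U - U'‖ + g := by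
  have hG := ha_le (G - U') (U - U')
  rw [ha_sub, norm_sub_rev] at hG
  linarith [ha_coer (U - U'), ha_sub U U' (U - U')]

theorem le_of_mul_sq_le_of_le_mul_add {l c C W S₁ S₂ g N e : ℝ} (hl : 0 < l) (hc : 0 ≤ c)
    (hC : 0 ≤ C) (hW : 0 ≤ W) (hS₁ : 0 ≤ S₁) (hS₂ : 0 ≤ S₂) (hg : 0 ≤ g)
    (hN : l * N ^ 2 ≤ (W + c * S₂) * N + g) (he : e ≤ C * N + S₁) :
    e ≤ C * √((2 / l) * g) + (1 / l) * (C * W + (C * c + l) * (S₁ + S₂)) := by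
  have hN' := le_div_add_sqrt_of_mul_sq_le hl (by positivity) hg hN
  have hsqrt : √(g / l) ≤ √((2 / l) * g) :=
    Real.sqrt_le_sqrt (by rw [div_mul_eq_mul_div]; gcongr; linarith)
  have hS : C * ((W + c * S₂) / l) + S₁ ≤ (1 / l) * (C * W + (C * c + l) * (S₁ + S₂)) := by
    rw [div_eq_mul_one_div, ← sub_nonneg]
    field_simp
    nlinarith [mul_nonneg (mul_nonneg hC hc) hS₁, mul_nonneg hl.le hS₂]
  nlinarith [mul_le_mul_of_nonneg_left hN' hC, mul_le_mul_of_nonneg_left hsqrt hC]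

theorem signorini_gradient_scheme_function_error_estimate_general
    {Ω : Type*} [MeasurableSpace Ω] (μ : Measure Ω)
    {B : Type*} [MeasurableSpace B] (ν : Measure B)
    (Γ₁ Γ₂ Γ₃ : Set B)
    (hΓunion : Γ₁ ∪ Γ₂ ∪ Γ₃ = Set.univ)
    (d : ℕ)
    (X : Type*) [AddCommGroup X] [Module ℝ X] [FiniteDimensional ℝ X]
    (Pi : X →ₗ[ℝ] Lp ℝ 2 μ)
    (T : X →ₗ[ℝ] Lp ℝ 2 ν)
    (gradD : X →ₗ[ℝ] Lp (EuclideanSpace ℝ (Fin d)) 2 μ)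
    (hgradD : Function.Injective gradD)
    (hT₁ : ∀ v : X, ∀ᵐ x ∂ν, x ∈ Γ₁ → (T v) x = 0)
    (Λ : Ω → Matrix (Fin d) (Fin d) ℝ) (hΛmeas : Measurable fun x i j => Λ x i j)
    (lamlo lamhi : ℝ) (hlamlo : 0 < lamlo) (hlam : lamlo ≤ lamhi)
    (hΛ : ∀ᵐ x ∂μ, (Λ x).IsSymm ∧ ∀ ξ : EuclideanSpace ℝ (Fin d),
        lamlo * ‖ξ‖ ^ 2 ≤ (inner ℝ (Matrix.toEuclideanLin (Λ x) ξ) ξ : ℝ) ∧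
        (inner ℝ (Matrix.toEuclideanLin (Λ x) ξ) ξ : ℝ) ≤ lamhi * ‖ξ‖ ^ 2)
    (f uBar : Lp ℝ 2 μ) (G : Lp (EuclideanSpace ℝ (Fin d)) 2 μ)
    (a b phi : Lp ℝ 2 ν)
    (hsig : ∀ᵐ x ∂ν, (x ∈ Γ₁ → b x = 0) ∧ (x ∈ Γ₂ → phi x = 0) ∧
        (x ∈ Γ₃ → b x ≤ a x ∧ phi x ≤ 0 ∧ phi x * (a x - b x) = 0))
    (KD : Set X)
    (hKD : KD = {v : X | ∀ᵐ x ∂ν, x ∈ Γ₃ → (T v) x ≤ a x})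
    (u : X) (hu : u ∈ KD)
    (hscheme : ∀ v ∈ KD,
      ∫ x, (inner ℝ (Matrix.toEuclideanLin (Λ x) ((gradD u) x)) ((gradD (u - v)) x) : ℝ) ∂μ
        ≤ ∫ x, (f x) * ((Pi (u - v)) x) ∂μ)
    (vD : X) (hvD : vD ∈ KD)
    (CD : ℝ) (hCD : CD = ⨆ v : {v : X // v ≠ 0}, (‖Pi v.1‖ + ‖T v.1‖) / ‖gradD v.1‖) :
    ‖Pi u - uBar‖ ≤
      CD * Real.sqrt ((2 / lamlo) * max 0 (∫ y, phi y * ((T vD) y - b y) ∂ν))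
        + (1 / lamlo) *
          (CD * (⨆ v : {v : X // v ≠ 0},
                |(∫ x, ((inner ℝ ((gradD v.1) x) (Matrix.toEuclideanLin (Λ x) (G x)) : ℝ)
                      - (Pi v.1) x * f x) ∂μ)
                  - ∫ y, phi y * (T v.1) y ∂ν| / ‖gradD v.1‖)
            + (CD * lamhi + lamlo) * (‖Pi vD - uBar‖ + ‖gradD vD - G‖)) := by
  have hhi : 0 ≤ lamhi := hlamlo.le.trans hlam
  have hB := hΛ.mono fun x hx => Matrix.abs_inner_toEuclideanLin_le hx.1 hlamlo.le hhi hx.2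
  have hCDv : ∀ v, ‖Pi v‖ + ‖T v‖ ≤ CD * ‖gradD v‖ :=
    hCD ▸ norm_add_norm_le_iSup_div_norm_mul Pi T hgradD
  have hCD₀ : 0 ≤ CD := hCD ▸ Real.iSup_nonneg fun v => by positivity
  simp only [integral_inner_toEuclideanLin_sub_mul hΛmeas hB]
  have hW := le_iSup_div_norm_mul hgradD fun v =>
    abs_diffusionPairing_sub_sub_le hΛmeas hB hhi G (gradD v) (Pi v) f (T v) phi (hCDv v)
  subst hKD
  have hsign := integral_mul_sub_nonneg_of_signorini hΓunion (hT₁ u) hu hsig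
  have hsplit := L2.integral_mul_coeFn_sub phi (T u) (T vD) b
  have hr := hscheme vD hvD
  have hWw := hW (u - vD)
  simp only [map_sub] at hr hWw hsplit
  refine le_of_mul_sq_le_of_le_mul_add (N := ‖gradD u - gradD vD‖) hlamlo hhi hCD₀
    (Real.iSup_nonneg fun v => by positivity) (norm_nonneg _) (norm_nonneg _) (le_max_left _ _)
    ?_ ?_
  · exact mul_norm_sub_sq_le_of_coercive (diffusionPairing_sub_left hΛmeas hB)
      (fun F Z => (le_abs_self _).trans (abs_diffusionPairing_le hΛmeas hB hhi F Z))
      (mul_norm_sq_le_diffusionPairing hΛmeas hB (hΛ.mono fun x hx ξ => (hx.2 ξ).1)) hr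
      (by linarith [abs_le.1 hWw, le_max_right 0 (∫ y, phi y * ((T vD) y - b y) ∂ν)])
  · calc ‖Pi u - uBar‖ = ‖Pi (u - vD) + (Pi vD - uBar)‖ := by rw [map_sub, sub_add_sub_cancel]
      _ ≤ CD * ‖gradD u - gradD vD‖ + ‖Pi vD - uBar‖ := by
        rw [← map_sub]
        exact (norm_add_le _ _).trans (by linarith [hCDv (u - vD), norm_nonneg (T (u - vD))])

/-- **Estimate (2.8) of Theorem 2.4** (Signorini problem, `L²`-boundary setting,
function error estimate): for every `v_D ∈ K_D`, the gradient-scheme solution `u`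
satisfies `‖Π u - ū‖ ≤ C_D sqrt((2/λ̲) G_D(ū,v_D)⁺) + (1/λ̲)[C_D W + (C_D λ̄ + λ̲) S_D(ū,v_D)]`
where `C_D = max_{v ≠ 0} (‖Π v‖ + ‖T v‖)/‖∇_D v‖` is the coercivity constant. -/
theorem signorini_gradient_scheme_function_error_estimate
    {Ω : Type*} [MeasurableSpace Ω] (μ : Measure Ω)
    {B : Type*} [MeasurableSpace B] (ν : Measure B)
    (Γ₁ Γ₂ Γ₃ : Set B)
    (hΓmeas : MeasurableSet Γ₁ ∧ MeasurableSet Γ₂ ∧ MeasurableSet Γ₃)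
    (hΓunion : Γ₁ ∪ Γ₂ ∪ Γ₃ = Set.univ)
    (hΓdisj : Disjoint Γ₁ Γ₂ ∧ Disjoint Γ₁ Γ₃ ∧ Disjoint Γ₂ Γ₃)
    (d : ℕ) (hd : 1 ≤ d)
    (X : Type*) [AddCommGroup X] [Module ℝ X] [FiniteDimensional ℝ X] [Nontrivial X]
    (Pi : X →ₗ[ℝ] Lp ℝ 2 μ)
    (T : X →ₗ[ℝ] Lp ℝ 2 ν)
    (gradD : X →ₗ[ℝ] Lp (EuclideanSpace ℝ (Fin d)) 2 μ)
    (hgradD : Function.Injective gradD)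
    (hT₁ : ∀ v : X, ∀ᵐ x ∂ν, x ∈ Γ₁ → (T v) x = 0)
    (Λ : Ω → Matrix (Fin d) (Fin d) ℝ) (hΛmeas : Measurable fun x i j => Λ x i j)
    (lamlo lamhi : ℝ) (hlamlo : 0 < lamlo) (hlam : lamlo ≤ lamhi)
    (hΛ : ∀ᵐ x ∂μ, (Λ x).IsSymm ∧ ∀ ξ : EuclideanSpace ℝ (Fin d),
        lamlo * ‖ξ‖ ^ 2 ≤ (inner ℝ (Matrix.toEuclideanLin (Λ x) ξ) ξ : ℝ) ∧
        (inner ℝ (Matrix.toEuclideanLin (Λ x) ξ) ξ : ℝ) ≤ lamhi * ‖ξ‖ ^ 2)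
    (f uBar : Lp ℝ 2 μ) (G : Lp (EuclideanSpace ℝ (Fin d)) 2 μ)
    (a b phi : Lp ℝ 2 ν)
    (hsig : ∀ᵐ x ∂ν, (x ∈ Γ₁ → b x = 0) ∧ (x ∈ Γ₂ → phi x = 0) ∧
        (x ∈ Γ₃ → b x ≤ a x ∧ phi x ≤ 0 ∧ phi x * (a x - b x) = 0))
    (KD : Set X)
    (hKD : KD = {v : X | ∀ᵐ x ∂ν, x ∈ Γ₃ → (T v) x ≤ a x})
    (hKDne : KD.Nonempty)
    (u : X) (hu : u ∈ KD)
    (hscheme : ∀ v ∈ KD,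
      ∫ x, (inner ℝ (Matrix.toEuclideanLin (Λ x) ((gradD u) x)) ((gradD (u - v)) x) : ℝ) ∂μ
        ≤ ∫ x, (f x) * ((Pi (u - v)) x) ∂μ)
    (vD : X) (hvD : vD ∈ KD)
    (CD : ℝ) (hCD : CD = ⨆ v : {v : X // v ≠ 0}, (‖Pi v.1‖ + ‖T v.1‖) / ‖gradD v.1‖) :
    ‖Pi u - uBar‖ ≤
      CD * Real.sqrt ((2 / lamlo) * max 0 (∫ y, phi y * ((T vD) y - b y) ∂ν))
        + (1 / lamlo) *
          (CD * (⨆ v : {v : X // v ≠ 0},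
                |(∫ x, ((inner ℝ ((gradD v.1) x) (Matrix.toEuclideanLin (Λ x) (G x)) : ℝ)
                      - (Pi v.1) x * f x) ∂μ)
                  - ∫ y, phi y * (T v.1) y ∂ν| / ‖gradD v.1‖)
            + (CD * lamhi + lamlo) * (‖Pi vD - uBar‖ + ‖gradD vD - G‖)) :=
  signorini_gradient_scheme_function_error_estimate_general μ ν Γ₁ Γ₂ Γ₃ hΓunion d X Pi T gradD
    hgradD hT₁ Λ hΛmeas lamlo lamhi hlamlo hlam hΛ f uBar G a b phi hsig KD hKD u hu hscheme vD hvD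
    CD hCD
end

section
/- Quadratic contact estimate used in the proofs of Theorems 2.8, 2.9, 6.2 and 6.4: let n ≥ 1, L ≥ 0 and h ≥ 0. Let w : ℝ^n → ℝ be differentiable at every point with Fréchet derivative Dw satisfying ‖Dw(x) − Dw(y)‖ ≤ L‖x − y‖ for all x, y ∈ ℝ^n. Let S ⊆ ℝ^n be a set of diameter at most h, and assume that the set {x ∈ S : w(x) = 0} has positive Lebesgue measure. Then |w(x)| ≤ (L/2) h² for every x ∈ S. -/
/-!
Almost every point of the zero set `Z` is a Lebesgue density point of `Z`. At such a point `z`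
the tangent cone of `Z` is the whole space, so `Dw(z)`, being also the derivative of `w` within
`Z` where `w` vanishes, is `0`. The Lipschitz bound on `Dw` gives the second-order Taylor
estimate `|w x - w z - Dw(z) (x - z)| ≤ L / 2 * ‖x - z‖ ^ 2`, and `‖x - z‖ ≤ h`.
-/

open MeasureTheory Set Metric Filter Topology Pointwise

section Taylor

variable {E F : Type*} [NormedAddCommGroup E] [NormedSpace ℝ E]
  [NormedAddCommGroup F] [NormedSpace ℝ F]

theorem norm_sub_sub_apply_le_of_lipschitz_fderiv {f : E → F} {f' : E → E →L[ℝ] F} {L : ℝ}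
    (hf : ∀ x, HasFDerivAt f (f' x) x) (hlip : ∀ x y, ‖f' x - f' y‖ ≤ L * ‖x - y‖) (a b : E) :
    ‖f b - f a - f' a (b - a)‖ ≤ L / 2 * ‖b - a‖ ^ 2 := by
  set v := b - a
  set φ : ℝ → F := fun t ↦ f (a + t • v) - f a - t • f' a v
  have hφ : ∀ t, HasDerivAt φ (f' (a + t • v) v - f' a v) t := fun t ↦ by
    have hline : HasDerivAt (fun t : ℝ ↦ a + t • v) v t := by
      simpa using ((hasDerivAt_id t).smul_const v).const_add a
    exact (((hf _).comp_hasDerivAt t hline).sub_const (f a)).sub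
      (by simpa using (hasDerivAt_id t).smul_const (f' a v))
  have hbound : ∀ t ∈ Ico (0 : ℝ) 1, ‖f' (a + t • v) v - f' a v‖ ≤ L * ‖v‖ ^ 2 * t := by
    rintro t ⟨ht, -⟩
    calc ‖f' (a + t • v) v - f' a v‖ ≤ ‖f' (a + t • v) - f' a‖ * ‖v‖ :=
          (f' (a + t • v) - f' a).le_opNorm v
      _ ≤ L * ‖t • v‖ * ‖v‖ := by
          gcongr
          simpa using hlip (a + t • v) a
      _ = L * ‖v‖ ^ 2 * t := by rw [norm_smul, Real.norm_of_nonneg ht]; ring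
  have hB : ∀ t, HasDerivAt (fun t : ℝ ↦ L / 2 * ‖v‖ ^ 2 * t ^ 2) (L * ‖v‖ ^ 2 * t) t := fun t ↦
    ((hasDerivAt_pow 2 t).const_mul (L / 2 * ‖v‖ ^ 2)).congr_deriv (by ring)
  have := image_norm_le_of_norm_deriv_right_le_deriv_boundary
    (fun t _ ↦ (hφ t).continuousAt.continuousWithinAt) (fun t _ ↦ (hφ t).hasDerivWithinAt)
    (by simp [φ]) hB hbound (right_mem_Icc.2 zero_le_one)
  simpa [φ, v] using this

end Taylor

section DensityPoint

variable {E : Type*} [NormedAddCommGroup E] [NormedSpace ℝ E] [FiniteDimensional ℝ E]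
  [MeasurableSpace E] [BorelSpace E] (μ : Measure E) [μ.IsAddHaarMeasure]

theorem tangentConeAt_eq_univ_of_density_one {s : Set E} {x : E}
    (h : Tendsto (fun r ↦ μ (s ∩ closedBall x r) / μ (closedBall x r)) (𝓝[>] 0) (𝓝 1)) :
    tangentConeAt ℝ s x = univ := by
  refine eq_univ_of_forall fun u ↦ ?_
  have hpos : ∀ᶠ p : ℝ × E in 𝓝[>] 0 ×ˢ 𝓝 u, 0 < p.1 :=
    tendsto_fst.eventually self_mem_nhdsWithin
  refine mem_tangentConeAt_of_frequently (𝓝[>] 0 ×ˢ 𝓝 u) (fun p ↦ p.1⁻¹) (fun p ↦ p.1 • p.2)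
    ?_ ?_ ?_
  · simpa using ((tendsto_nhdsWithin_of_tendsto_nhds tendsto_id).comp tendsto_fst).smul
      (tendsto_snd (f := 𝓝[>] (0 : ℝ)) (g := 𝓝 u))
  · rw [Filter.frequently_iff]
    intro U hU
    obtain ⟨t₁, ht₁, t₂, ht₂, hU⟩ := mem_prod_iff.1 hU
    obtain ⟨ε, hε, hball⟩ := Metric.mem_nhds_iff.1 ht₂
    have hmeet := Measure.eventually_nonempty_inter_smul_of_density_one μ s x h _
      measurableSet_closedBall (measure_closedBall_pos μ u (half_pos hε)).ne'
    obtain ⟨r, ⟨y, hys, hy⟩, hr⟩ := (hmeet.and ht₁).exists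
    obtain ⟨v, hv, hvy⟩ : ∃ v ∈ closedBall u (ε / 2), r • v = -x + y := by
      simpa [mem_smul_set, singleton_add] using hy
    exact ⟨(r, v), hU ⟨hr, hball (closedBall_subset_ball (half_lt_self hε) hv)⟩,
      by simpa [hvy] using hys⟩
  · refine tendsto_snd.congr' (hpos.mono fun p hp ↦ ?_)
    simp [smul_smul, inv_mul_cancel₀ hp.ne']

theorem uniqueDiffWithinAt_of_density_one {s : Set E} {x : E} (hx : x ∈ s)
    (h : Tendsto (fun r ↦ μ (s ∩ closedBall x r) / μ (closedBall x r)) (𝓝[>] 0) (𝓝 1)) :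
    UniqueDiffWithinAt ℝ s x :=
  ⟨by simp [tangentConeAt_eq_univ_of_density_one μ h], subset_closure hx⟩

end DensityPoint

theorem quadratic_contact_estimate_general
    (n : ℕ) (L h : ℝ) (hL : 0 ≤ L) (hh : 0 ≤ h)
    (w : EuclideanSpace ℝ (Fin n) → ℝ) (hw : Differentiable ℝ w)
    (hlip : ∀ x y, ‖fderiv ℝ w x - fderiv ℝ w y‖ ≤ L * ‖x - y‖)
    (S : Set (EuclideanSpace ℝ (Fin n)))
    (hdiam : EMetric.diam S ≤ ENNReal.ofReal h)
    (hpos : 0 < volume {x | x ∈ S ∧ w x = 0}) :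
    ∀ x ∈ S, |w x| ≤ L / 2 * h ^ 2 := by
  intro x hx
  set Z := {x | x ∈ S ∧ w x = 0}
  obtain ⟨z, hz, hdens⟩ := Measure.exists_mem_of_measure_ne_zero_of_ae hpos.ne'
    (Besicovitch.ae_tendsto_measure_inter_div volume Z)
  have hwz : fderiv ℝ w z = 0 :=
    (uniqueDiffWithinAt_of_density_one volume hz hdens).eq (hw z).hasFDerivAt.hasFDerivWithinAt
      ((hasFDerivWithinAt_const 0 z Z).congr (fun y hy ↦ hy.2) hz.2)
  have hxz : ‖x - z‖ ≤ h := by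
    rw [← dist_eq_norm, ← ENNReal.ofReal_le_ofReal_iff hh, ← edist_dist]
    exact (Metric.edist_le_ediam_of_mem hx hz.1).trans hdiam
  have htaylor : |w x| ≤ L / 2 * ‖x - z‖ ^ 2 := by
    simpa [hz.2, hwz] using
      norm_sub_sub_apply_le_of_lipschitz_fderiv (fun y ↦ (hw y).hasFDerivAt) hlip z x
  exact htaylor.trans (by gcongr)

/-- **Quadratic contact estimate** (used in the proofs of Theorems 2.8, 2.9, 6.2 and
6.4): if `w : ℝⁿ → ℝ` is differentiable with `L`-Lipschitz Fréchet derivative, `S` is a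
set of diameter at most `h`, and `{x ∈ S : w x = 0}` has positive Lebesgue measure, then
`|w x| ≤ (L/2) h²` for every `x ∈ S`. -/
theorem quadratic_contact_estimate
    (n : ℕ) (hn : 1 ≤ n) (L h : ℝ) (hL : 0 ≤ L) (hh : 0 ≤ h)
    (w : EuclideanSpace ℝ (Fin n) → ℝ) (hw : Differentiable ℝ w)
    (hlip : ∀ x y, ‖fderiv ℝ w x - fderiv ℝ w y‖ ≤ L * ‖x - y‖)
    (S : Set (EuclideanSpace ℝ (Fin n)))
    (hdiam : EMetric.diam S ≤ ENNReal.ofReal h)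
    (hpos : 0 < volume {x | x ∈ S ∧ w x = 0}) :
    ∀ x ∈ S, |w x| ≤ L / 2 * h ^ 2 :=
  quadratic_contact_estimate_general n L h hL hh w hw hlip S hdiam hpos
end
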